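/- arXiv:2410.04544 — 2 statements merged into one kernel-verified Lean document; each statement's English description precedes it below -/
import Mathlib

section
/- Let P be a finite set of points in the plane in general position, and let u, z be two non-adjacent vertices of the convex hull of P (i.e., z is not u and not a hull-neighbor of u). Let T(u) and T(z) be the triangles formed by u (resp. z) together with their respective hull neighbors. Then the interiors of T(u) and T(z) are disjoint. -/
/-!
Let `λ` be the barycentric coordinate of `u` with respect to the triangle `t u v`. The supporting
lines of the hull edges `tu` and `uv` make the two other coordinates nonnegative on the whole hull,
so every hull vertex outside `{t, u, v}` has `λ < 0`, since otherwise it would lie in the triangle.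
Comparing with the supporting line of a putative third hull edge at `u` shows that `u` has no hull
neighbour besides `t` and `v`. Hence `a`, `z`, `b` are hull vertices different from `u`, so `λ ≤ 0`
on `T(z)`, while `λ > 0` on the interior of `T(u)`.
-/

open Set MeasureTheory

noncomputable section

abbrev Pt := EuclideanSpace ℝ (Fin 2)

/-- General position: no three distinct points of `S` are collinear. -/
def GenPos (S : Set Pt) : Prop :=
  ∀ p q r : Pt, p ∈ S → q ∈ S → r ∈ S → p ≠ q → q ≠ r → p ≠ r →
    ¬ Collinear ℝ ({p, q, r} : Set Pt)

/-- `p` is a vertex (extreme point) of the convex hull of `S`. -/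
def IsHullVertex (S : Set Pt) (p : Pt) : Prop :=
  p ∈ S ∧ p ∉ convexHull ℝ (S \ {p})

/-- `p` is active for the hull vertex `u` of `S`: it is a vertex of
`CH(S \ {u})` but not a vertex of `CH(S)`. -/
def ActiveFor (S : Set Pt) (u p : Pt) : Prop :=
  IsHullVertex (S \ {u}) p ∧ ¬ IsHullVertex S p

/-- `a` and `b` are adjacent (consecutive) vertices on the convex hull of `S`:
both are hull vertices and the segment between them lies on the hull boundary. -/
def AdjacentVertices (S : Set Pt) (a b : Pt) : Prop :=
  a ≠ b ∧ IsHullVertex S a ∧ IsHullVertex S b ∧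
    segment ℝ a b ⊆ frontier (convexHull ℝ S)

/-- 2D cross product. -/
def cross2 (a b : Pt) : ℝ := a 0 * b 1 - a 1 * b 0

/-- `(t, u, v)` are consecutive vertices of the hull of `S`, in clockwise order
(the turn `t → u → v` is a right turn). -/
def ConsecutiveCW (S : Set Pt) (t u v : Pt) : Prop :=
  AdjacentVertices S t u ∧ AdjacentVertices S u v ∧ t ≠ v ∧
    cross2 (u - t) (v - u) ≤ 0

/-- Area of the convex hull of `S`. -/
def hullArea (S : Set Pt) : ENNReal := volume (convexHull ℝ S)

open Module

lemma Convex.exists_dual_eq_of_midpoint_notMem_interior {E : Type*} [NormedAddCommGroup E]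
    [NormedSpace ℝ E] {K : Set E} (hK : Convex ℝ K) (hint : (interior K).Nonempty) {p q : E}
    (hp : p ∈ K) (hq : q ∈ K) (hm : midpoint ℝ p q ∉ interior K) :
    ∃ f : StrongDual ℝ E, f ≠ 0 ∧ f q = f p ∧ ∀ x ∈ K, f x ≤ f p := by
  obtain ⟨f, hf0, hle⟩ := geometric_hahn_banach_of_nonempty_interior_point hK hm hint
  have hmid : f (midpoint ℝ p q) = (f p + f q) / 2 := by
    rw [midpoint_eq_smul_add, map_smul, map_add, smul_eq_mul, invOf_eq_inv]
    ring
  have hfp := hle p hp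
  have hfq := hle q hq
  exact ⟨f, hf0, by linarith, fun x hx => by linarith [hle x hx]⟩

lemma collinear_of_dual_eq {V : Type*} [AddCommGroup V] [Module ℝ V] [FiniteDimensional ℝ V]
    (hV : finrank ℝ V = 2) {f : Dual ℝ V} (hf : f ≠ 0) {p q r : V} (hq : f q = f p)
    (hr : f r = f p) : Collinear ℝ ({p, q, r} : Set V) := by
  have hlevel : ∀ y ∈ ({p, q, r} : Set V), f y = f p := by
    rintro y (rfl | rfl | rfl) <;> simp [*]
  have hspan : vectorSpan ℝ ({p, q, r} : Set V) ≤ LinearMap.ker f := by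
    rw [vectorSpan_def, Submodule.span_le]
    rintro _ ⟨y, hy, y', hy', rfl⟩
    simp [hlevel y hy, hlevel y' hy']
  rw [collinear_iff_finrank_le_one]
  have := f.finrank_ker_add_one_of_ne_zero hf
  have := Submodule.finrank_mono hspan
  omega

namespace AffineBasis

variable {ι : Type*}

lemma apply_sub_eq_sum_coord_mul [Fintype ι] {V : Type*} [AddCommGroup V] [Module ℝ V]
    (B : AffineBasis ι ℝ V) (f : V →ₗ[ℝ] ℝ) (c : ℝ) (x : V) :
    f x - c = ∑ i, B.coord i x * (f (B i) - c) := by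
  conv_lhs => rw [← B.linear_combination_coord_eq_self x]
  simp only [map_sum, map_smul, smul_eq_mul, mul_sub, Finset.sum_sub_distrib, ← Finset.sum_mul,
    B.sum_coord_apply_eq_one, one_mul]

lemma coord_nonneg_of_apply_le [Fintype ι] {V : Type*} [AddCommGroup V] [Module ℝ V]
    (B : AffineBasis ι ℝ V) {f : V →ₗ[ℝ] ℝ} {c : ℝ} {k : ι} (hf : ∀ i ≠ k, f (B i) = c)
    (hk : f (B k) < c) {x : V} (hx : f x ≤ c) : 0 ≤ B.coord k x := by
  have hexp := B.apply_sub_eq_sum_coord_mul f c x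
  rw [Finset.sum_eq_single k (fun i _ hi => by rw [hf i hi, sub_self, mul_zero]) (by simp)]
    at hexp
  nlinarith

lemma disjoint_interior_convexHull_of_coord_nonpos [Finite ι] {E : Type*}
    [NormedAddCommGroup E] [NormedSpace ℝ E] (B : AffineBasis ι ℝ E) (k : ι) {s : Set E}
    (hs : ∀ x ∈ s, B.coord k x ≤ 0) :
    Disjoint (interior (convexHull ℝ (range B))) (convexHull ℝ s) := by
  have hsub : convexHull ℝ s ⊆ {x | B.coord k x ≤ 0} :=
    convexHull_min hs ((convex_Iic 0).affine_preimage (B.coord k))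
  rw [B.interior_convexHull]
  exact disjoint_left.2 fun x hx hx' => (hx k).not_ge (hsub hx')

end AffineBasis

def triangleBasis {t u v : Pt} (h : ¬ Collinear ℝ ({t, u, v} : Set Pt)) :
    AffineBasis (Fin 3) ℝ Pt :=
  ⟨![t, u, v], affineIndependent_iff_not_collinear_set.2 h, by
    rw [(affineIndependent_iff_not_collinear_set.2 h).affineSpan_eq_top_iff_card_eq_finrank_add_one]
    simp⟩

lemma coe_triangleBasis {t u v : Pt} (h : ¬ Collinear ℝ ({t, u, v} : Set Pt)) :
    ⇑(triangleBasis h) = ![t, u, v] :=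
  rfl

lemma range_triangleBasis {t u v : Pt} (h : ¬ Collinear ℝ ({t, u, v} : Set Pt)) :
    range (triangleBasis h) = {t, u, v} := by
  simp only [coe_triangleBasis, Matrix.range_cons, Matrix.range_empty, union_empty, singleton_union]

lemma interior_convexHull_nonempty_of_not_collinear {S : Set Pt} {t u v : Pt} (ht : t ∈ S)
    (hu : u ∈ S) (hv : v ∈ S) (h : ¬ Collinear ℝ ({t, u, v} : Set Pt)) :
    (interior (convexHull ℝ S)).Nonempty := by
  rw [interior_convexHull_nonempty_iff_affineSpan_eq_top, eq_top_iff, ← (triangleBasis h).tot,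
    range_triangleBasis]
  exact affineSpan_mono ℝ (insert_subset ht (insert_subset hu (singleton_subset_iff.2 hv)))

namespace AdjacentVertices

variable {S : Set Pt} {p q : Pt}

lemma isHullVertex_left (h : AdjacentVertices S p q) : IsHullVertex S p := h.2.1

lemma isHullVertex_right (h : AdjacentVertices S p q) : IsHullVertex S q := h.2.2.1

lemma left_mem (h : AdjacentVertices S p q) : p ∈ S := h.isHullVertex_left.1

lemma right_mem (h : AdjacentVertices S p q) : q ∈ S := h.isHullVertex_right.1

lemma symm (h : AdjacentVertices S p q) : AdjacentVertices S q p :=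
  ⟨h.1.symm, h.isHullVertex_right, h.isHullVertex_left, segment_symm ℝ p q ▸ h.2.2.2⟩

lemma exists_support (hS : GenPos S) (hint : (interior (convexHull ℝ S)).Nonempty)
    (h : AdjacentVertices S p q) :
    ∃ f : StrongDual ℝ Pt, f q = f p ∧ (∀ x ∈ convexHull ℝ S, f x ≤ f p) ∧
      ∀ x ∈ S, x ≠ p → x ≠ q → f x < f p := by
  have hm : midpoint ℝ p q ∉ interior (convexHull ℝ S) :=
    (h.2.2.2 (midpoint_mem_segment p q)).2
  obtain ⟨f, hf0, hfq, hle⟩ :=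
    (convex_convexHull ℝ S).exists_dual_eq_of_midpoint_notMem_interior hint
      (subset_convexHull ℝ S h.left_mem) (subset_convexHull ℝ S h.right_mem) hm
  refine ⟨f, hfq, hle, fun x hx hxp hxq => (hle x (subset_convexHull ℝ S hx)).lt_of_ne ?_⟩
  intro hfx
  have hf0' : (f : Pt →ₗ[ℝ] ℝ) ≠ 0 := by exact_mod_cast hf0
  exact hS p q x h.left_mem h.right_mem hx h.1 (Ne.symm hxq) (Ne.symm hxp)
    (collinear_of_dual_eq finrank_euclideanSpace_fin hf0' hfq hfx)

end AdjacentVertices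

section Triangle

variable {S : Set Pt} {t u v : Pt}

lemma triangleBasis_coord_zero_two_nonneg (hS : GenPos S)
    (h : ¬ Collinear ℝ ({t, u, v} : Set Pt))
    (htu : AdjacentVertices S t u) (huv : AdjacentVertices S u v) {x : Pt}
    (hx : x ∈ convexHull ℝ S) :
    0 ≤ (triangleBasis h).coord 0 x ∧ 0 ≤ (triangleBasis h).coord 2 x := by
  have htv : t ≠ v := by
    rintro rfl
    exact h (by simpa [pair_comm] using collinear_pair ℝ t u)
  have hint := interior_convexHull_nonempty_of_not_collinear htu.left_mem htu.right_mem
    huv.right_mem h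
  obtain ⟨f, hfut, hfle, hflt⟩ := htu.exists_support hS hint
  obtain ⟨g, hgvu, hgle, hglt⟩ := huv.exists_support hS hint
  constructor
  · refine (triangleBasis h).coord_nonneg_of_apply_le (f := (g : Pt →ₗ[ℝ] ℝ)) ?_
      (hglt t htu.left_mem htu.1 htv) (hgle x hx)
    intro i hi
    fin_cases i
    exacts [absurd rfl hi, rfl, hgvu]
  · refine (triangleBasis h).coord_nonneg_of_apply_le (f := (f : Pt →ₗ[ℝ] ℝ)) ?_
      (hflt v huv.right_mem htv.symm huv.1.symm) (hfle x hx)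
    intro i hi
    fin_cases i
    exacts [rfl, hfut, absurd rfl hi]

lemma triangleBasis_coord_one_neg (hS : GenPos S) (h : ¬ Collinear ℝ ({t, u, v} : Set Pt))
    (htu : AdjacentVertices S t u) (huv : AdjacentVertices S u v) {p : Pt}
    (hp : IsHullVertex S p) (hpt : p ≠ t) (hpu : p ≠ u) (hpv : p ≠ v) :
    (triangleBasis h).coord 1 p < 0 := by
  obtain ⟨h0, h2⟩ :=
    triangleBasis_coord_zero_two_nonneg hS h htu huv (subset_convexHull ℝ S hp.1)
  refine lt_of_not_ge fun h1 => hp.2 ?_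
  have hmem : p ∈ convexHull ℝ (range (triangleBasis h)) := by
    rw [AffineBasis.convexHull_eq_nonneg_coord]
    intro i
    fin_cases i
    exacts [h0, h1, h2]
  rw [range_triangleBasis] at hmem
  refine convexHull_mono ?_ hmem
  rintro x (rfl | rfl | rfl)
  exacts [⟨htu.left_mem, hpt.symm⟩, ⟨htu.right_mem, hpu.symm⟩, ⟨huv.right_mem, hpv.symm⟩]

lemma eq_or_eq_of_adjacentVertices (hS : GenPos S) (h : ¬ Collinear ℝ ({t, u, v} : Set Pt))
    (htu : AdjacentVertices S t u) (huv : AdjacentVertices S u v) {z : Pt}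
    (huz : AdjacentVertices S u z) : z = t ∨ z = v := by
  by_contra! hz
  obtain ⟨h0, h2⟩ :=
    triangleBasis_coord_zero_two_nonneg hS h htu huv (subset_convexHull ℝ S huz.right_mem)
  have h1 :=
    triangleBasis_coord_one_neg hS h htu huv huz.isHullVertex_right hz.1 huz.1.symm hz.2
  have hint := interior_convexHull_nonempty_of_not_collinear htu.left_mem htu.right_mem
    huv.right_mem h
  obtain ⟨f, hfzu, -, hflt⟩ := huz.exists_support hS hint
  have hft := hflt t htu.left_mem htu.1 hz.1.symm
  have hfv := hflt v huv.right_mem huv.1.symm hz.2.symm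
  have hsum := (triangleBasis h).sum_coord_apply_eq_one z
  have hexp := (triangleBasis h).apply_sub_eq_sum_coord_mul f (f u) z
  rw [Fin.sum_univ_three] at hsum hexp
  simp only [coe_triangleBasis, Matrix.cons_val_zero, Matrix.cons_val_one, Matrix.cons_val_two,
    Matrix.tail_cons, Matrix.head_cons, ContinuousLinearMap.coe_coe, hfzu, sub_self, mul_zero,
    add_zero] at hexp
  rcases h0.eq_or_lt with h0 | h0
  · nlinarith [mul_pos (by linarith : 0 < (triangleBasis h).coord 2 z) (sub_pos.2 hfv)]
  · nlinarith [mul_pos h0 (sub_pos.2 hft), mul_nonneg h2 (sub_nonneg.2 hfv.le)]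

lemma triangleBasis_coord_one_nonpos (hS : GenPos S) (h : ¬ Collinear ℝ ({t, u, v} : Set Pt))
    (htu : AdjacentVertices S t u) (huv : AdjacentVertices S u v) {p : Pt}
    (hp : IsHullVertex S p) (hpu : p ≠ u) : (triangleBasis h).coord 1 p ≤ 0 := by
  by_cases hpt : p = t
  · subst hpt
    exact ((triangleBasis h).coord_apply_ne (by decide : (1 : Fin 3) ≠ 0)).le
  by_cases hpv : p = v
  · subst hpv
    exact ((triangleBasis h).coord_apply_ne (by decide : (1 : Fin 3) ≠ 2)).le
  exact (triangleBasis_coord_one_neg hS h htu huv hp hpt hpu hpv).le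

end Triangle

theorem nonadjacent_triangles_disjoint_general (P : Finset Pt)
    (hgp : GenPos (↑P : Set Pt))
    (t u v a z b : Pt)
    (hcu : ConsecutiveCW (↑P : Set Pt) t u v)
    (hcz : ConsecutiveCW (↑P : Set Pt) a z b)
    (hz : z ∉ ({t, u, v} : Set Pt)) :
    Disjoint (interior (convexHull ℝ ({t, u, v} : Set Pt)))
             (interior (convexHull ℝ ({a, z, b} : Set Pt))) := by
  obtain ⟨htu, huv, htv, -⟩ := hcu
  obtain ⟨haz, hzb, -, -⟩ := hcz
  simp only [mem_insert_iff, mem_singleton_iff, not_or] at hz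
  obtain ⟨hzt, hzu, hzv⟩ := hz
  have h : ¬ Collinear ℝ ({t, u, v} : Set Pt) :=
    hgp t u v htu.left_mem htu.right_mem huv.right_mem htu.1 huv.1 htv
  have hau : a ≠ u := by
    rintro rfl
    rcases eq_or_eq_of_adjacentVertices hgp h htu huv haz with rfl | rfl <;> contradiction
  have hbu : b ≠ u := by
    rintro rfl
    rcases eq_or_eq_of_adjacentVertices hgp h htu huv hzb.symm with rfl | rfl <;> contradiction
  rw [← range_triangleBasis h]
  refine ((triangleBasis h).disjoint_interior_convexHull_of_coord_nonpos 1 ?_).mono_right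
    interior_subset
  rintro x (rfl | rfl | rfl)
  exacts [triangleBasis_coord_one_nonpos hgp h htu huv haz.isHullVertex_left hau,
    triangleBasis_coord_one_nonpos hgp h htu huv haz.isHullVertex_right hzu,
    triangleBasis_coord_one_nonpos hgp h htu huv hzb.isHullVertex_right hbu]

theorem nonadjacent_triangles_disjoint (P : Finset Pt)
    (hgp : GenPos (↑P : Set Pt))
    (h5 : 5 ≤ Set.ncard {p : Pt | IsHullVertex (↑P : Set Pt) p})
    (t u v a z b : Pt)
    (hcu : ConsecutiveCW (↑P : Set Pt) t u v)
    (hcz : ConsecutiveCW (↑P : Set Pt) a z b)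
    (hz : z ∉ ({t, u, v} : Set Pt)) :
    Disjoint (interior (convexHull ℝ ({t, u, v} : Set Pt)))
             (interior (convexHull ℝ ({a, z, b} : Set Pt))) :=
  nonadjacent_triangles_disjoint_general P hgp t u v a z b hcu hcz hz
end
end

section
/- Consider any sequence of deletions (peeling process) on a set P of n points in the plane in general position, removing one point at a time until P is empty. At each stage, with S the current point set, say a point p 'becomes active for u' at that stage if p is active for the hull vertex u of S but was not active for u (or u was not a hull vertex) at the previous stage. Then the total number of (point, vertex) activation events over the entire process is at most 3n. -/
open Set MeasureTheory

noncomputable section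

/-!
If `p` becomes active for `u` at some stage, it stays active for `u` as long as it is not a hull
vertex: `u` cannot be deleted in the meantime, since `p` would be a hull vertex of every later set.
Hence the activations of a fixed point `p` have pairwise distinct vertices `u`, and at the last
stage `m` at which `p` becomes active for some vertex, `p` is active for all of them. But `p` lies
in the convex hull of at most three other points of the current set (Carathéodory), and every `u`
for which `p` is active must be one of these three. Summing over `p` gives `3 n`.
-/

theorem exists_finset_card_le_finrank_succ_of_mem_convexHull {𝕜 E : Type*} [Field 𝕜]
    [LinearOrder 𝕜] [IsStrictOrderedRing 𝕜] [AddCommGroup E] [Module 𝕜 E] [FiniteDimensional 𝕜 E]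
    {s : Set E} {x : E} (hx : x ∈ convexHull 𝕜 s) :
    ∃ t : Finset E, ↑t ⊆ s ∧ t.card ≤ Module.finrank 𝕜 E + 1 ∧ x ∈ convexHull 𝕜 (t : Set E) := by
  rw [convexHull_eq_union] at hx
  simp only [mem_iUnion] at hx
  obtain ⟨t, hts, hind, hxt⟩ := hx
  refine ⟨t, hts, ?_, hxt⟩
  calc t.card = Fintype.card t := (Fintype.card_coe t).symm
    _ ≤ Module.finrank 𝕜 (vectorSpan 𝕜 (range ((↑) : t → E))) + 1 := hind.card_le_finrank_succ
    _ ≤ Module.finrank 𝕜 E + 1 := by gcongr; exact Submodule.finrank_le _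

theorem IsHullVertex.mono {S T : Set Pt} {p : Pt} (h : IsHullVertex S p) (hTS : T ⊆ S)
    (hp : p ∈ T) : IsHullVertex T p :=
  ⟨hp, fun hT => h.2 (convexHull_mono (sdiff_subset_sdiff_left hTS) hT)⟩

section ActiveFor

variable {S T : Set Pt} {u p : Pt}

theorem ActiveFor.mem_of_subset (h : ActiveFor S u p) (hTS : T ⊆ S) (hpT : p ∈ T)
    (hp : ¬ IsHullVertex T p) : u ∈ T := by
  by_contra hu
  exact hp (h.1.mono (fun x hx => ⟨hTS hx, fun hxu => hu (hxu ▸ hx)⟩) hpT)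

theorem ActiveFor.of_subset (h : ActiveFor S u p) (hTS : T ⊆ S) (hpT : p ∈ T)
    (hp : ¬ IsHullVertex T p) : ActiveFor T u p :=
  ⟨h.1.mono (sdiff_subset_sdiff_left hTS) ⟨hpT, h.1.1.2⟩, hp⟩

theorem exists_finset_card_le_three_setOf_activeFor_subset (S : Set Pt) (p : Pt) :
    ∃ t : Finset Pt, t.card ≤ 3 ∧ {u | ActiveFor S u p} ⊆ ↑t := by
  by_cases hact : ∃ u, ActiveFor S u p
  swap
  · exact ⟨∅, by simp, fun u hu => (hact ⟨u, hu⟩).elim⟩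
  obtain ⟨u₀, hu₀⟩ := hact
  have hp : p ∈ convexHull ℝ (S \ {p}) := by
    by_contra h
    exact hu₀.2 ⟨hu₀.1.1.1, h⟩
  obtain ⟨t, hts, htcard, hpt⟩ := exists_finset_card_le_finrank_succ_of_mem_convexHull hp
  refine ⟨t, by simpa [finrank_euclideanSpace_fin] using htcard, fun u hu => ?_⟩
  by_contra hut
  refine hu.1.2 (convexHull_mono (fun x hx => ?_) hpt)
  exact ⟨⟨(hts hx).1, fun hxu => hut (hxu ▸ hx)⟩, (hts hx).2⟩

end ActiveFor

def BecomesActive (S : ℕ → Set Pt) (i : ℕ) (u p : Pt) : Prop :=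
  IsHullVertex (S i) u ∧ ActiveFor (S i) u p ∧
    (i = 0 ∨ ¬ (IsHullVertex (S (i - 1)) u ∧ ActiveFor (S (i - 1)) u p))

def activations (S : ℕ → Set Pt) (n : ℕ) : Set (ℕ × Pt × Pt) :=
  {e | e.1 < n ∧ BecomesActive S e.1 e.2.1 e.2.2}

section Peeling

variable {S : ℕ → Set Pt} {i j : ℕ} {u p : Pt}

theorem BecomesActive.activeFor_of_le (hS : Antitone S) (h : BecomesActive S i u p) (hij : i ≤ j)
    (hpj : p ∈ S j) (hp : ¬ IsHullVertex (S j) p) :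
    IsHullVertex (S j) u ∧ ActiveFor (S j) u p :=
  ⟨h.1.mono (hS hij) (h.2.1.mem_of_subset (hS hij) hpj hp), h.2.1.of_subset (hS hij) hpj hp⟩

theorem BecomesActive.stage_eq (hS : Antitone S) (hi : BecomesActive S i u p)
    (hj : BecomesActive S j u p) : i = j := by
  suffices ∀ {i j}, BecomesActive S i u p → BecomesActive S j u p → ¬ i < j by
    rcases lt_trichotomy i j with h | h | h
    exacts [absurd h (this hi hj), h, absurd h (this hj hi)]
  intro i j hi hj hij
  have hprev : j - 1 ≤ j := Nat.sub_le j 1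
  have hpj : p ∈ S j := hj.2.1.1.1.1
  have hp : ¬ IsHullVertex (S (j - 1)) p := fun hv => hj.2.1.2 (hv.mono (hS hprev) hpj)
  rcases hj.2.2 with hj0 | hnew
  · omega
  · exact hnew (hi.activeFor_of_le hS (by omega) (hS hprev hpj) hp)

theorem ncard_activations_inter_fiber_le_three (hS : Antitone S) (n : ℕ) (p : Pt) :
    (activations S n ∩ {e | e.2.2 = p}).ncard ≤ 3 := by
  set F := activations S n ∩ {e | e.2.2 = p}
  rcases F.eq_empty_or_nonempty with hF | hF
  · simp [hF]
  have hFfin : (Prod.fst '' F).Finite :=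
    (finite_Iio n).subset (by rintro _ ⟨e, he, rfl⟩; exact he.1.1)
  obtain ⟨_, ⟨emax, ⟨hmax, hmaxp⟩, rfl⟩, hle⟩ := exists_max_image _ id hFfin (hF.image _)
  have hlast : BecomesActive S emax.1 emax.2.1 p := hmaxp ▸ hmax.2
  have hpm : p ∈ S emax.1 := hlast.2.1.1.1.1
  obtain ⟨t, htcard, ht⟩ := exists_finset_card_le_three_setOf_activeFor_subset (S emax.1) p
  have hmaps : ∀ e ∈ F, e.2.1 ∈ (t : Set Pt) := by
    rintro e ⟨he, rfl⟩
    exact ht (he.2.activeFor_of_le hS (hle _ ⟨e, ⟨he, rfl⟩, rfl⟩) hpm hlast.2.1.2).2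
  have hinj : InjOn (fun e : ℕ × Pt × Pt => e.2.1) F := by
    rintro ⟨i, u, q⟩ ⟨hi, hq : q = p⟩ ⟨j, u', q'⟩ ⟨hj, hq' : q' = p⟩ (rfl : u = u')
    obtain rfl : q = q' := hq.trans hq'.symm
    rw [show i = j from hi.2.stage_eq hS hj.2]
  calc F.ncard ≤ (t : Set Pt).ncard := ncard_le_ncard_of_injOn _ hmaps hinj
    _ ≤ 3 := by rwa [ncard_coe_finset]

theorem ncard_activations_le (hS : Antitone S) {P : Finset Pt} (hP : S 0 ⊆ ↑P) (n : ℕ) :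
    (activations S n).ncard ≤ 3 * P.card := by
  have hcover : activations S n = ⋃ p ∈ P, activations S n ∩ {e | e.2.2 = p} := by
    ext e
    simp only [mem_iUnion, mem_inter_iff, exists_prop]
    exact ⟨fun he => ⟨_, hP (hS (Nat.zero_le _) he.2.2.1.1.1.1), he, rfl⟩, fun ⟨_, _, he, _⟩ => he⟩
  calc (activations S n).ncard
      = (⋃ p ∈ P, activations S n ∩ {e | e.2.2 = p}).ncard := congrArg ncard hcover
    _ ≤ ∑ p ∈ P, (activations S n ∩ {e | e.2.2 = p}).ncard := P.set_ncard_biUnion_le _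
    _ ≤ ∑ _p ∈ P, 3 := Finset.sum_le_sum fun p _ => ncard_activations_inter_fiber_le_three hS n p
    _ = 3 * P.card := by rw [Finset.sum_const, smul_eq_mul, mul_comm]

end Peeling

theorem total_activations_le_three_n_general (P : Finset Pt) (n : ℕ) (hn : P.card = n)
    (f : ℕ → Pt) :
    Set.ncard {e : ℕ × Pt × Pt |
        e.1 < n ∧
        IsHullVertex ((↑P : Set Pt) \ f '' Set.Iio e.1) e.2.1 ∧
        ActiveFor ((↑P : Set Pt) \ f '' Set.Iio e.1) e.2.1 e.2.2 ∧
        (e.1 = 0 ∨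
          ¬ (IsHullVertex ((↑P : Set Pt) \ f '' Set.Iio (e.1 - 1)) e.2.1 ∧
             ActiveFor ((↑P : Set Pt) \ f '' Set.Iio (e.1 - 1)) e.2.1 e.2.2))} ≤
      3 * n := by
  have hS : Antitone fun i => (↑P : Set Pt) \ f '' Iio i :=
    fun _ _ hij => sdiff_subset_sdiff_right (image_mono (Iio_subset_Iio hij))
  subst hn
  exact ncard_activations_le hS sdiff_subset _

theorem total_activations_le_three_n (P : Finset Pt) (n : ℕ) (hn : P.card = n)
    (hgp : GenPos (↑P : Set Pt)) (f : ℕ → Pt)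
    (hmem : ∀ i < n, f i ∈ P)
    (hinj : Set.InjOn f (Set.Iio n))
    (hsurj : ∀ p ∈ P, ∃ i < n, f i = p) :
    Set.ncard {e : ℕ × Pt × Pt |
        e.1 < n ∧
        IsHullVertex ((↑P : Set Pt) \ f '' Set.Iio e.1) e.2.1 ∧
        ActiveFor ((↑P : Set Pt) \ f '' Set.Iio e.1) e.2.1 e.2.2 ∧
        (e.1 = 0 ∨
          ¬ (IsHullVertex ((↑P : Set Pt) \ f '' Set.Iio (e.1 - 1)) e.2.1 ∧
             ActiveFor ((↑P : Set Pt) \ f '' Set.Iio (e.1 - 1)) e.2.1 e.2.2))} ≤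
      3 * n :=
  total_activations_le_three_n_general P n hn f
end
end
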